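/- arXiv:2312.15464 — 7 statements merged into one kernel-verified Lean document; each statement's English description precedes it below -/
import Mathlib

section
/- Let n ≥ 2(k+r), let D be a minimum k-dominating set of the Kneser graph K(n,r), and let ũ ⊆ [n] with |ũ| = r−1. Then there exists x ∈ [n] \ ũ such that ũ ∪ {x} ∉ D. -/
open Finset

/-- The vertex set of the Kneser graph `K(n,r)`: the `r`-element subsets of `[n] = {1,…,n}`. -/
def KneserVerts (n r : ℕ) : Finset (Finset ℕ) := (Finset.Icc 1 n).powersetCard r

/-- Adjacency in a Kneser graph: distinct disjoint sets. -/
def KneserAdj (u v : Finset ℕ) : Prop := u ≠ v ∧ Disjoint u v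

instance (u v : Finset ℕ) : Decidable (KneserAdj u v) := by
  unfold KneserAdj; infer_instance

/-- `D` is a `k`-dominating set of `K(n,r)`: every vertex outside `D` has at least
`k` neighbours in `D`. -/
def IsKDomSet (n r k : ℕ) (D : Finset (Finset ℕ)) : Prop :=
  D ⊆ KneserVerts n r ∧
    ∀ v ∈ KneserVerts n r, v ∉ D → k ≤ (D.filter fun u => KneserAdj v u).card

/-- `D` is a `k`-tuple dominating set of `K(n,r)`: every vertex has at least `k`
vertices of `D` in its closed neighbourhood. -/
def IsKTupleDomSet (n r k : ℕ) (D : Finset (Finset ℕ)) : Prop :=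
  D ⊆ KneserVerts n r ∧
    ∀ v ∈ KneserVerts n r, k ≤ (D.filter fun u => u = v ∨ KneserAdj v u).card

/-- `D` is a `k`-tuple total dominating set of `K(n,r)`: every vertex has at least
`k` neighbours in `D`. -/
def IsKTupleTotalDomSet (n r k : ℕ) (D : Finset (Finset ℕ)) : Prop :=
  D ⊆ KneserVerts n r ∧
    ∀ v ∈ KneserVerts n r, k ≤ (D.filter fun u => KneserAdj v u).card

/-- The `k`-domination number `γ_k(K(n,r))`. -/
noncomputable def kdomNum (n r k : ℕ) : ℕ :=
  sInf {m | ∃ D, IsKDomSet n r k D ∧ D.card = m}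

/-- The `k`-tuple domination number `γ_{×k}(K(n,r))`. -/
noncomputable def ktupleDomNum (n r k : ℕ) : ℕ :=
  sInf {m | ∃ D, IsKTupleDomSet n r k D ∧ D.card = m}

/-- The `k`-tuple total domination number `γ_{×k,t}(K(n,r))`. -/
noncomputable def ktupleTotalDomNum (n r k : ℕ) : ℕ :=
  sInf {m | ∃ D, IsKTupleTotalDomSet n r k D ∧ D.card = m}

/-- `S` is a 2-packing of `K(n,r)`: any two distinct members are neither adjacent
nor have a common neighbour (i.e. are at distance at least 3). -/
def IsTwoPacking (n r : ℕ) (S : Finset (Finset ℕ)) : Prop :=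
  S ⊆ KneserVerts n r ∧
    ∀ u ∈ S, ∀ v ∈ S, u ≠ v →
      ¬ KneserAdj u v ∧ ∀ w ∈ KneserVerts n r, ¬ (KneserAdj u w ∧ KneserAdj w v)

/-- The 2-packing number `ρ₂(K(n,r))`. -/
noncomputable def twoPackingNum (n r : ℕ) : ℕ :=
  sSup {m | ∃ S, IsTwoPacking n r S ∧ S.card = m}

/-- A clique in a Kneser graph: a family of pairwise disjoint sets. -/
def IsKneserClique (D : Finset (Finset ℕ)) : Prop :=
  ∀ u ∈ D, ∀ v ∈ D, u ≠ v → Disjoint u v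

/-
If `D` contained every extension `ũ ∪ {x}` of `ũ`, we could trade `k + 1` of them for `k` fresh
`r`-sets inside the part `g` of `[n]` avoiding `ũ` and the traded points. The traded vertices are
dominated by the fresh sets, a vertex meeting `ũ` never had a traded neighbour, and a vertex `v`
disjoint from `ũ` keeps the neighbours `ũ ∪ {t}`, `t ∈ g \ v`, of which there are at least
`|g| - r ≥ k` because `n ≥ 2(k + r)`. The result is a smaller `k`-dominating set.
-/

section Extensions

variable {α : Type*} [DecidableEq α]

def extensions (u X : Finset α) : Finset (Finset α) := X.image (insert · u)

variable {u X s e : Finset α} {t : α}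

theorem mem_extensions : e ∈ extensions u X ↔ ∃ x ∈ X, insert x u = e := mem_image

theorem subset_of_mem_extensions (he : e ∈ extensions u X) : u ⊆ e := by
  obtain ⟨x, -, rfl⟩ := mem_extensions.1 he
  exact subset_insert x u

theorem insert_mem_extensions_iff (ht : t ∉ u) : insert t u ∈ extensions u X ↔ t ∈ X := by
  refine ⟨fun he => ?_, fun htX => mem_extensions.2 ⟨t, htX, rfl⟩⟩
  obtain ⟨x, hxX, hx⟩ := mem_extensions.1 he
  have : t ∈ insert x u := hx ▸ mem_insert_self t u
  rcases mem_insert.1 this with rfl | htu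
  · exact hxX
  · exact absurd htu ht

theorem card_extensions (h : Disjoint X u) : (extensions u X).card = X.card :=
  card_image_of_injOn fun _ hx _ _ hxy => (insert_inj (disjoint_left.1 h hx)).1 hxy

theorem extensions_subset_powersetCard (hX : X ⊆ s) (hu : u ⊆ s) (h : Disjoint X u) :
    extensions u X ⊆ s.powersetCard (u.card + 1) := by
  intro e he
  obtain ⟨x, hxX, rfl⟩ := mem_extensions.1 he
  exact mem_powersetCard.2
    ⟨insert_subset (hX hxX) hu, card_insert_of_notMem (disjoint_left.1 h hxX)⟩

theorem exists_subset_powersetCard_card_eq {g : Finset α} {k m : ℕ} (hg : k + m ≤ g.card) :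
    ∃ W ⊆ g.powersetCard (m + 1), W.card = k := by
  obtain ⟨w, hwg, hw⟩ := exists_subset_card_eq (show m ≤ g.card by omega)
  have hk : k ≤ (g \ w).card := by rw [card_sdiff_of_subset hwg]; omega
  obtain ⟨T, hT, hTk⟩ := exists_subset_card_eq hk
  have hTw : Disjoint T w := disjoint_of_subset_left hT sdiff_disjoint
  refine ⟨extensions w T, ?_, by rw [card_extensions hTw, hTk]⟩
  simpa only [hw] using
    extensions_subset_powersetCard (hT.trans sdiff_subset) hwg hTw

end Extensions

section Kneser

variable {u v w s X : Finset ℕ} {t : ℕ}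

theorem kneserAdj_of_disjoint (h : Disjoint u v) (hne : u.Nonempty ∨ v.Nonempty) :
    KneserAdj u v := by
  refine ⟨fun huv => ?_, h⟩
  subst huv
  rw [disjoint_self_iff_empty] at h
  simp [h] at hne

theorem kneserAdj_insert (hvu : Disjoint v u) (htv : t ∉ v) : KneserAdj v (insert t u) :=
  kneserAdj_of_disjoint (disjoint_insert_right.2 ⟨htv, hvu⟩) (.inr (insert_nonempty t u))

theorem kneserAdj_of_mem_extensions (hv : v ∈ extensions u X) (hu : Disjoint u w)
    (hX : Disjoint X w) : KneserAdj v w := by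
  obtain ⟨x, hxX, rfl⟩ := mem_extensions.1 hv
  exact kneserAdj_of_disjoint (disjoint_insert_left.2 ⟨disjoint_left.1 hX hxX, hu⟩)
    (.inl (insert_nonempty x u))

theorem notMem_extensions_of_kneserAdj (hvu : ¬Disjoint v u) (hs : KneserAdj v s) :
    s ∉ extensions u X :=
  fun he => hvu (hs.2.mono_right (subset_of_mem_extensions he))

end Kneser

theorem kdomNum_le_card {n r k : ℕ} {D : Finset (Finset ℕ)} (hD : IsKDomSet n r k D) :
    kdomNum n r k ≤ D.card :=
  Nat.sInf_le ⟨D, hD, rfl⟩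

namespace IsKDomSet

variable {n r k : ℕ} {D W : Finset (Finset ℕ)} {u X g : Finset ℕ}

theorem sdiff_extensions_union (hD : IsKDomSet n r k D)
    (hext : ∀ x ∈ Icc 1 n \ u, insert x u ∈ D) (hgn : g ⊆ Icc 1 n) (hgu : Disjoint u g)
    (hgX : Disjoint X g) (hgcard : k + r ≤ g.card) (hW : W ⊆ g.powersetCard r)
    (hWcard : k ≤ W.card) : IsKDomSet n r k (D \ extensions u X ∪ W) := by
  refine ⟨union_subset (sdiff_subset.trans hD.1) (hW.trans (powersetCard_mono hgn)),
    fun v hv hvD' => ?_⟩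
  by_cases hvE : v ∈ extensions u X
  · refine hWcard.trans (card_le_card fun w hw => mem_filter.2 ⟨mem_union_right _ hw, ?_⟩)
    have hwg := (mem_powersetCard.1 (hW hw)).1
    exact kneserAdj_of_mem_extensions hvE (hgu.mono_right hwg) (hgX.mono_right hwg)
  have hvD : v ∉ D := fun h => hvD' (mem_union_left _ (mem_sdiff.2 ⟨h, hvE⟩))
  by_cases hvu : Disjoint v u
  · have hgv : k ≤ (g \ v).card := by
      have := le_card_sdiff v g
      rw [(mem_powersetCard.1 hv).2] at this
      omega
    calc k ≤ (g \ v).card := hgv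
      _ = (extensions u (g \ v)).card :=
        (card_extensions (hgu.symm.mono_left sdiff_subset)).symm
      _ ≤ _ := card_le_card fun e he => ?_
    obtain ⟨t, ht, rfl⟩ := mem_extensions.1 he
    obtain ⟨htg, htv⟩ := mem_sdiff.1 ht
    have htu : t ∉ u := disjoint_right.1 hgu htg
    have hDt : insert t u ∈ D := hext t (mem_sdiff.2 ⟨hgn htg, htu⟩)
    have hEt : insert t u ∉ extensions u X :=
      (insert_mem_extensions_iff htu).not.2 (disjoint_right.1 hgX htg)
    exact mem_filter.2 ⟨mem_union_left _ (mem_sdiff.2 ⟨hDt, hEt⟩), kneserAdj_insert hvu htv⟩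
  · refine (hD.2 v hv hvD).trans (card_le_card fun s hs => ?_)
    obtain ⟨hsD, hvs⟩ := mem_filter.1 hs
    exact mem_filter.2
      ⟨mem_union_left _ (mem_sdiff.2 ⟨hsD, notMem_extensions_of_kneserAdj hvu hvs⟩), hvs⟩

theorem exists_card_lt_of_extensions_mem (hD : IsKDomSet n r k D) (hr : 1 ≤ r)
    (hn : 2 * (k + r) ≤ n) (hu : u ⊆ Icc 1 n) (hcard : u.card = r - 1)
    (hext : ∀ x ∈ Icc 1 n \ u, insert x u ∈ D) :
    ∃ D', IsKDomSet n r k D' ∧ D'.card < D.card := by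
  have hIu : (Icc 1 n \ u).card = n - (r - 1) := by
    rw [card_sdiff_of_subset hu, Nat.card_Icc, hcard, Nat.add_sub_cancel]
  obtain ⟨X, hX, hXcard⟩ := exists_subset_card_eq (show k + 1 ≤ (Icc 1 n \ u).card by omega)
  have hXu : Disjoint X u := disjoint_of_subset_left hX sdiff_disjoint
  have hED : extensions u X ⊆ D := fun e he => by
    obtain ⟨x, hx, rfl⟩ := mem_extensions.1 he
    exact hext x (hX hx)
  have hgcard : ((Icc 1 n \ u) \ X).card = n - (r - 1) - (k + 1) := by
    rw [card_sdiff_of_subset hX, hIu, hXcard]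
  obtain ⟨W, hW, hWcard⟩ := exists_subset_powersetCard_card_eq (k := k) (m := r - 1)
    (show k + (r - 1) ≤ ((Icc 1 n \ u) \ X).card by omega)
  rw [Nat.sub_add_cancel hr] at hW
  refine ⟨D \ extensions u X ∪ W, hD.sdiff_extensions_union hext
    (sdiff_subset.trans sdiff_subset) (disjoint_sdiff.mono_right sdiff_subset) disjoint_sdiff
    (by omega) hW hWcard.ge, ?_⟩
  have hkD : k + 1 ≤ D.card := hXcard ▸ card_extensions hXu ▸ card_le_card hED
  calc (D \ extensions u X ∪ W).card ≤ (D \ extensions u X).card + W.card := card_union_le _ _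
    _ = D.card - (k + 1) + k := by
      rw [card_sdiff_of_subset hED, card_extensions hXu, hXcard, hWcard]
    _ < D.card := by omega

end IsKDomSet

theorem stmt_1_general (n r k : ℕ) (hr : 1 ≤ r) (hn : 2 * (k + r) ≤ n)
    (D : Finset (Finset ℕ)) (hD : IsKDomSet n r k D) (hmin : D.card = kdomNum n r k)
    (u : Finset ℕ) (hu : u ⊆ Finset.Icc 1 n) (hcard : u.card = r - 1) :
    ∃ x ∈ Finset.Icc 1 n \ u, insert x u ∉ D := by
  by_contra! hext
  obtain ⟨D', hD', hlt⟩ := hD.exists_card_lt_of_extensions_mem hr hn hu hcard hext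
  have := kdomNum_le_card hD'
  omega

theorem stmt_1 (n r k : ℕ) (hr : 1 ≤ r) (hk : 1 ≤ k) (hn : 2 * (k + r) ≤ n)
    (D : Finset (Finset ℕ)) (hD : IsKDomSet n r k D) (hmin : D.card = kdomNum n r k)
    (u : Finset ℕ) (hu : u ⊆ Finset.Icc 1 n) (hcard : u.card = r - 1) :
    ∃ x ∈ Finset.Icc 1 n \ u, insert x u ∉ D :=
  stmt_1_general n r k hr hn D hD hmin u hu hcard
end

section
/- For all positive integers n, r, k with n ≥ 2(k+r), γ_k(K(n,r)) ≥ γ_k(K(n+1,r)), where γ_k denotes the k-domination number. -/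
open Finset

/-- number of members of `D` disjoint from `A` -/
def tdis (D : Finset (Finset ℕ)) (A : Finset ℕ) : ℕ := (D.filter fun u => Disjoint u A).card

/-- the set of "bad" (r-1)-subsets of [n] -/
def BadSet (n r k : ℕ) (D : Finset (Finset ℕ)) : Finset (Finset ℕ) :=
  ((Finset.Icc 1 n).powersetCard (r-1)).filter fun A => tdis D A < k

lemma star_mem (n r k : ℕ) (D : Finset (Finset ℕ)) (hD : IsKDomSet n r k D)
    (A : Finset ℕ) (hA : A ⊆ Finset.Icc 1 n) (hAc : A.card = r - 1) (hr : 1 ≤ r)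
    (ht : tdis D A < k) :
    ∀ x ∈ Finset.Icc 1 n, x ∉ A → insert x A ∈ D := by
  intro x hx hxA
  by_contra hmem
  have hv : insert x A ∈ KneserVerts n r := by
    rw [KneserVerts, mem_powersetCard]
    constructor
    · exact insert_subset hx hA
    · rw [card_insert_of_notMem hxA, hAc]; omega
  have hk := hD.2 _ hv hmem
  have hsub : (D.filter fun u => KneserAdj (insert x A) u) ⊆ D.filter fun u => Disjoint u A := by
    intro u hu
    rw [mem_filter] at hu ⊢
    refine ⟨hu.1, ?_⟩
    have := hu.2.2.symm
    exact this.mono_right (subset_insert x A)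
  have := card_le_card hsub
  unfold tdis at ht
  omega

lemma swap_lemma (n r k : ℕ) (hr : 1 ≤ r) (hk : 1 ≤ k) (hn : 2 * (k + r) ≤ n)
    (D : Finset (Finset ℕ)) (hD : IsKDomSet n r k D)
    (A : Finset ℕ) (hA : A ∈ BadSet n r k D) :
    ∃ D', IsKDomSet n r k D' ∧ D'.card ≤ D.card ∧
      BadSet n r k D' ⊆ (BadSet n r k D).erase A := by
  rw [BadSet, mem_filter, mem_powersetCard] at hA
  obtain ⟨⟨hAsub, hAcard⟩, ht⟩ := hA
  set X : Finset ℕ := Finset.Icc 1 n \ A with hXdef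
  have hXcard : X.card = n - (r - 1) := by
    rw [hXdef, card_sdiff_of_subset hAsub, Nat.card_Icc, hAcard]
    omega
  -- choose K ⊆ X with |K| = k
  obtain ⟨K, hKX, hKcard⟩ := Finset.exists_subset_card_eq (show k ≤ X.card by omega)
  set Z : Finset ℕ := X \ K with hZdef
  have hZcard : Z.card = X.card - k := by rw [hZdef, card_sdiff_of_subset hKX, hKcard]
  obtain ⟨B, hBZ, hBcard⟩ := Finset.exists_subset_card_eq (show r - 1 ≤ Z.card by omega)
  have hZB : k ≤ (Z \ B).card := by
    rw [card_sdiff_of_subset hBZ, hBcard]; omega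
  obtain ⟨W, hWZB, hWcard⟩ := Finset.exists_subset_card_eq hZB
  set U : Finset (Finset ℕ) := W.image (fun z => insert z B) with hUdef
  set Rem : Finset (Finset ℕ) := K.image (fun x => insert x A) with hRdef
  -- basic facts
  have hXA : ∀ x ∈ X, x ∈ Finset.Icc 1 n ∧ x ∉ A := by
    intro x hx; rw [hXdef, mem_sdiff] at hx; exact hx
  have hstar : ∀ x ∈ X, insert x A ∈ D := by
    intro x hx
    exact star_mem n r k D hD A hAsub hAcard hr ht x (hXA x hx).1 (hXA x hx).2
  have hRemD : Rem ⊆ D := by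
    intro u hu
    rw [hRdef, mem_image] at hu
    obtain ⟨x, hx, rfl⟩ := hu
    exact hstar x (hKX hx)
  have hAinj : Set.InjOn (fun x => insert x A) X := by
    intro a ha b hb hab
    have haA := (hXA a ha).2
    have hbA := (hXA b hb).2
    simp only at hab
    have : a ∈ insert b A := hab ▸ mem_insert_self a A
    rcases mem_insert.1 this with h | h
    · exact h
    · exact absurd h haA
  have hRemCard : Rem.card = k := by
    rw [hRdef, card_image_of_injOn (hAinj.mono (by exact_mod_cast coe_subset.2 hKX)), hKcard]
  have hWZ : W ⊆ Z := hWZB.trans sdiff_subset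
  have hWB : ∀ z ∈ W, z ∉ B := by
    intro z hz; exact (mem_sdiff.1 (hWZB hz)).2
  have hUinj : Set.InjOn (fun z => insert z B) W := by
    intro a ha b hb hab
    simp only at hab
    have : a ∈ insert b B := hab ▸ mem_insert_self a B
    rcases mem_insert.1 this with h | h
    · exact h
    · exact absurd h (hWB a ha)
  have hUcard : U.card = k := by rw [hUdef, card_image_of_injOn hUinj, hWcard]
  have hZX : Z ⊆ X := sdiff_subset
  have hZK : ∀ z ∈ Z, z ∉ K := fun z hz => (mem_sdiff.1 hz).2
  have hUprops : ∀ u ∈ U, u ⊆ Z ∧ u.card = r ∧ Disjoint u A ∧ Disjoint u K := by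
    intro u hu
    rw [hUdef, mem_image] at hu
    obtain ⟨z, hz, rfl⟩ := hu
    have hzZ : z ∈ Z := hWZ hz
    have hsub : insert z B ⊆ Z := insert_subset hzZ hBZ
    refine ⟨hsub, ?_, ?_, ?_⟩
    · rw [card_insert_of_notMem (hWB z hz), hBcard]; omega
    · refine disjoint_left.2 fun a ha haA => ?_
      exact (hXA a (hZX (hsub ha))).2 haA
    · exact disjoint_left.2 fun a ha haK => hZK a (hsub ha) haK
  set D' : Finset (Finset ℕ) := (D \ Rem) ∪ U with hD'def
  have hUD' : U ⊆ D' := subset_union_right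
  have hDRemD' : D \ Rem ⊆ D' := subset_union_left
  -- star members not removed stay
  have hstar' : ∀ x ∈ X, x ∉ K → insert x A ∈ D' := by
    intro x hx hxK
    apply hDRemD'
    rw [mem_sdiff]
    refine ⟨hstar x hx, ?_⟩
    rw [hRdef, mem_image]
    rintro ⟨y, hy, hxy⟩
    have : y = x := hAinj (hKX hy) hx hxy
    exact hxK (this ▸ hy)
  have hD'card : D'.card ≤ D.card := by
    have h1 := card_union_le (D \ Rem) U
    have h2 : (D \ Rem).card = D.card - Rem.card := card_sdiff_of_subset hRemD
    have h3 := card_le_card hRemD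
    rw [hD'def]
    omega
  have hD'verts : D' ⊆ KneserVerts n r := by
    intro u hu
    rcases mem_union.1 hu with h | h
    · exact hD.1 (mem_sdiff.1 h).1
    · obtain ⟨hsub, hcard, _, _⟩ := hUprops u h
      rw [KneserVerts, mem_powersetCard]
      exact ⟨(hsub.trans hZX).trans sdiff_subset, hcard⟩
  refine ⟨D', ⟨hD'verts, ?_⟩, hD'card, ?_⟩
  · -- domination
    intro v hv hvD'
    by_cases hvD : v ∈ D
    · -- v is a removed star member
      have hvR : v ∈ Rem := by
        by_contra h
        exact hvD' (hDRemD' (mem_sdiff.2 ⟨hvD, h⟩))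
      rw [hRdef, mem_image] at hvR
      obtain ⟨x, hxK, rfl⟩ := hvR
      have hUfil : U ⊆ D'.filter fun u => KneserAdj (insert x A) u := by
        intro u hu
        obtain ⟨huZ, _, huA, huK⟩ := hUprops u hu
        rw [mem_filter]
        refine ⟨hUD' hu, ?_, ?_⟩
        · intro h; exact hvD' (h ▸ hUD' hu)
        · rw [disjoint_insert_left]
          exact ⟨fun h => disjoint_left.1 huK h hxK, huA.symm⟩
      calc k = U.card := hUcard.symm
        _ ≤ _ := card_le_card hUfil
    · have hvvert := hv
      by_cases hvA : Disjoint v A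
      · -- v disjoint from A : use remaining star members
        have hvcard : v.card = r := (mem_powersetCard.1 hv).2
        have hsrc : k ≤ ((X \ v) \ K).card := by
          have h1 := card_le_card_sdiff_add_card (s := X) (t := v)
          have h2 := card_le_card_sdiff_add_card (s := X \ v) (t := K)
          omega
        have hmap : ∀ x ∈ (X \ v) \ K, insert x A ∈ D'.filter fun u => KneserAdj v u := by
          intro x hx
          rw [mem_sdiff, mem_sdiff] at hx
          obtain ⟨⟨hxX, hxv⟩, hxK⟩ := hx
          rw [mem_filter]
          refine ⟨hstar' x hxX hxK, ?_, ?_⟩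
          · intro h; exact hvD' (h ▸ hstar' x hxX hxK)
          · rw [disjoint_insert_right]
            exact ⟨hxv, hvA⟩
        have hinj : Set.InjOn (fun x => insert x A) ↑((X \ v) \ K) := by
          apply hAinj.mono
          intro a ha
          simp only [coe_sdiff, Set.mem_diff] at ha ⊢
          exact ha.1.1
        calc k ≤ ((X \ v) \ K).card := hsrc
          _ ≤ _ := card_le_card_of_injOn _ hmap hinj
      · -- v meets A : old neighbours survive
        have hsub : (D.filter fun u => KneserAdj v u) ⊆ D'.filter fun u => KneserAdj v u := by
          intro u hu
          rw [mem_filter] at hu ⊢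
          refine ⟨?_, hu.2⟩
          apply hDRemD'
          rw [mem_sdiff]
          refine ⟨hu.1, ?_⟩
          rw [hRdef, mem_image]
          rintro ⟨x, hxK, rfl⟩
          exact hvA (hu.2.2.mono_right (subset_insert x A))
        calc k ≤ (D.filter fun u => KneserAdj v u).card := hD.2 v hv hvD
          _ ≤ _ := card_le_card hsub
  · -- BadSet D' ⊆ erase A (BadSet D)
    intro A'' hA''
    rw [BadSet, mem_filter] at hA''
    obtain ⟨hA''pc, hA''t⟩ := hA''
    have hA''card : A''.card = r - 1 := (mem_powersetCard.1 hA''pc).2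
    rw [mem_erase]
    have hAgood : ¬ tdis D' A < k := by
      intro hlt
      have hUfil : U ⊆ D'.filter fun u => Disjoint u A := by
        intro u hu
        rw [mem_filter]
        exact ⟨hUD' hu, (hUprops u hu).2.2.1⟩
      have := card_le_card hUfil
      unfold tdis at hlt
      omega
    constructor
    · intro h; exact hAgood (h ▸ hA''t)
    · rw [BadSet, mem_filter]
      refine ⟨hA''pc, ?_⟩
      by_cases hd : Disjoint A'' A
      · -- impossible: many stars disjoint from A''
        exfalso
        have hsrc : k ≤ ((X \ A'') \ K).card := by
          have h1 := card_le_card_sdiff_add_card (s := X) (t := A'')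
          have h2 := card_le_card_sdiff_add_card (s := X \ A'') (t := K)
          omega
        have hmap : ∀ x ∈ (X \ A'') \ K, insert x A ∈ D'.filter fun u => Disjoint u A'' := by
          intro x hx
          rw [mem_sdiff, mem_sdiff] at hx
          obtain ⟨⟨hxX, hxv⟩, hxK⟩ := hx
          rw [mem_filter]
          refine ⟨hstar' x hxX hxK, ?_⟩
          rw [disjoint_insert_left]
          exact ⟨hxv, hd.symm⟩
        have hinj : Set.InjOn (fun x => insert x A) ↑((X \ A'') \ K) := by
          apply hAinj.mono
          intro a ha
          simp only [coe_sdiff, Set.mem_diff] at ha ⊢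
          exact ha.1.1
        have := card_le_card_of_injOn _ hmap hinj
        unfold tdis at hA''t
        omega
      · -- members disjoint from A'' survive
        have hsub : (D.filter fun u => Disjoint u A'') ⊆ D'.filter fun u => Disjoint u A'' := by
          intro u hu
          rw [mem_filter] at hu ⊢
          refine ⟨?_, hu.2⟩
          apply hDRemD'
          rw [mem_sdiff]
          refine ⟨hu.1, ?_⟩
          rw [hRdef, mem_image]
          rintro ⟨x, hxK, rfl⟩
          exact hd (disjoint_left.2 fun a ha haA =>
            disjoint_left.1 hu.2 (mem_insert_of_mem haA) ha)
        have := card_le_card hsub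
        unfold tdis at hA''t ⊢
        omega

lemma reduceBad (n r k : ℕ) (hr : 1 ≤ r) (hk : 1 ≤ k) (hn : 2 * (k + r) ≤ n) :
    ∀ m : ℕ, ∀ D : Finset (Finset ℕ), IsKDomSet n r k D → (BadSet n r k D).card ≤ m →
      ∃ D', IsKDomSet n r k D' ∧ D'.card ≤ D.card ∧ BadSet n r k D' = ∅ := by
  intro m
  induction m with
  | zero =>
    intro D hD hcard
    exact ⟨D, hD, le_refl _, card_eq_zero.1 (Nat.le_zero.1 hcard)⟩
  | succ m ih =>
    intro D hD hcard
    by_cases hB : BadSet n r k D = ∅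
    · exact ⟨D, hD, le_refl _, hB⟩
    · obtain ⟨A, hA⟩ := nonempty_iff_ne_empty.2 hB
      obtain ⟨D', hD', hle, hsub⟩ := swap_lemma n r k hr hk hn D hD A hA
      have hcard' : (BadSet n r k D').card ≤ m := by
        have h1 := card_le_card hsub
        have h2 := card_erase_of_mem hA
        omega
      obtain ⟨D'', hD'', hle'', hB''⟩ := ih D' hD' hcard'
      exact ⟨D'', hD'', hle''.trans hle, hB''⟩

lemma liftDom (n r k : ℕ) (hr : 1 ≤ r) (D : Finset (Finset ℕ))
    (hD : IsKDomSet n r k D) (hB : BadSet n r k D = ∅) :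
    IsKDomSet (n + 1) r k D := by
  have hIcc : Finset.Icc 1 n ⊆ Finset.Icc 1 (n + 1) :=
    Finset.Icc_subset_Icc_right (Nat.le_succ n)
  have hvsub : KneserVerts n r ⊆ KneserVerts (n+1) r := by
    intro u hu
    rw [KneserVerts, mem_powersetCard] at hu ⊢
    exact ⟨hu.1.trans hIcc, hu.2⟩
  have hnp1 : (n+1) ∉ Finset.Icc 1 n := by
    rw [Finset.mem_Icc]; omega
  refine ⟨hD.1.trans hvsub, ?_⟩
  intro w hw hwD
  rw [KneserVerts, mem_powersetCard] at hw
  obtain ⟨hwsub, hwcard⟩ := hw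
  by_cases hwn : w ⊆ Finset.Icc 1 n
  · exact hD.2 w (mem_powersetCard.2 ⟨hwn, hwcard⟩) hwD
  · have hwmem : (n+1) ∈ w := by
      by_contra h
      apply hwn
      intro a ha
      have := hwsub ha
      rw [Finset.mem_Icc] at this ⊢
      rcases Nat.lt_or_ge a (n+1) with h' | h'
      · omega
      · have : a = n + 1 := by omega
        exact absurd (this ▸ ha) h
    set A : Finset ℕ := w.erase (n+1) with hAdef
    have hAsub : A ⊆ Finset.Icc 1 n := by
      intro a ha
      rw [hAdef, mem_erase] at ha
      have := hwsub ha.2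
      rw [Finset.mem_Icc] at this ⊢
      omega
    have hAcard : A.card = r - 1 := by
      rw [hAdef, card_erase_of_mem hwmem, hwcard]
    have hApc : A ∈ (Finset.Icc 1 n).powersetCard (r-1) :=
      mem_powersetCard.2 ⟨hAsub, hAcard⟩
    have hAnotbad : A ∉ BadSet n r k D := hB ▸ notMem_empty A
    have htA : k ≤ tdis D A := by
      by_contra h
      exact hAnotbad (by rw [BadSet, mem_filter]; exact ⟨hApc, by omega⟩)
    have hsub : (D.filter fun u => Disjoint u A) ⊆ D.filter fun u => KneserAdj w u := by
      intro u hu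
      rw [mem_filter] at hu ⊢
      obtain ⟨huD, huA⟩ := hu
      have huIcc : u ⊆ Finset.Icc 1 n := (mem_powersetCard.1 (hD.1 huD)).1
      have hnu : (n+1) ∉ u := fun h => hnp1 (huIcc h)
      refine ⟨huD, ?_, ?_⟩
      · intro h; exact hnu (h ▸ hwmem)
      · refine disjoint_left.2 fun a haw hau => ?_
        have : a ≠ n + 1 := fun h => hnu (h ▸ hau)
        have haA : a ∈ A := by rw [hAdef, mem_erase]; exact ⟨this, haw⟩
        exact disjoint_left.1 huA hau haA
    calc k ≤ tdis D A := htA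
      _ ≤ _ := card_le_card hsub

theorem stmt_2 (n r k : ℕ) (hr : 1 ≤ r) (hk : 1 ≤ k) (hn : 2 * (k + r) ≤ n) :
    kdomNum (n + 1) r k ≤ kdomNum n r k := by
  have hne : {m | ∃ D, IsKDomSet n r k D ∧ D.card = m}.Nonempty := by
    refine ⟨(KneserVerts n r).card, KneserVerts n r, ⟨Subset.rfl, ?_⟩, rfl⟩
    intro v hv hvD
    exact absurd hv hvD
  obtain ⟨D, hD, hDcard⟩ := Nat.sInf_mem hne
  obtain ⟨D', hD', hle, hB⟩ := reduceBad n r k hr hk hn (BadSet n r k D).card D hD le_rfl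
  have hD'' : IsKDomSet (n+1) r k D' := liftDom n r k hr D' hD' hB
  have h1 : kdomNum (n+1) r k ≤ D'.card := Nat.sInf_le ⟨D', hD'', rfl⟩
  calc kdomNum (n+1) r k ≤ D'.card := h1
    _ ≤ D.card := hle
    _ = kdomNum n r k := hDcard
end

section
/- For k ≥ 1 and n ≥ r(k+r), the k-tuple total domination number of the Kneser graph K(n,r) equals k+r, and conversely, if γ_{×k,t}(K(n,r)) = k+r (with n ≥ 2r), then n ≥ r(k+r). Moreover, for n ≥ r(k+r), every minimum k-tuple total dominating set of K(n,r) is a clique. -/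
/-!
If `D` is a `k`-tuple total dominating set of `K(n,r)`, every `T ⊆ [n]` with `|T| ≤ r` is
disjoint from at least `k` members of `D`, since `T` extends to a vertex. Greedily picking a
member disjoint from `T` and adding one of its points to `T` then shows
`|D| ≥ |{u ∈ D | u ∩ T ≠ ∅}| + (r - |T|) + k`. Taking `T = ∅` gives `|D| ≥ k + r`; taking
`T = {x}` for a point shared by two members gives `|D| ≥ k + r + 1`, so a set of size `k + r`
is a clique, which forces `(k + r) r ≤ n`. Conversely, `k + r` disjoint blocks of `r`
consecutive integers form a dominating set: a vertex meets at most `r` of them and is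
adjacent to the rest.
-/


open Finset

section Transversal

variable {α : Type*} [DecidableEq α] {D : Finset (Finset α)}

lemma card_filter_not_disjoint_lt_insert {T u : Finset α} {x : α} (hu : u ∈ D)
    (huT : Disjoint u T) (hx : x ∈ u) :
    #{v ∈ D | ¬Disjoint v T} < #{v ∈ D | ¬Disjoint v (insert x T)} := by
  refine card_lt_card <| (ssubset_iff_of_subset ?_).2 ⟨u, ?_, ?_⟩
  · exact monotone_filter_right D fun v _ hv hvx => hv (hvx.mono_right (subset_insert x T))
  · simpa [mem_filter, hu] using fun h => disjoint_left.1 h hx (mem_insert_self x T)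
  · simpa [mem_filter] using fun _ => huT

lemma card_filter_not_disjoint_add_le {S : Finset α} {k r : ℕ} (hDS : ∀ u ∈ D, u ⊆ S)
    (hD : ∀ u ∈ D, u.Nonempty) (hk : 0 < k)
    (hdisj : ∀ T ⊆ S, #T ≤ r → k ≤ #{u ∈ D | Disjoint u T})
    {T : Finset α} (hT : T ⊆ S) (hTr : #T ≤ r) :
    #{u ∈ D | ¬Disjoint u T} + (r - #T) + k ≤ #D := by
  induction hm : r - #T generalizing T with
  | zero =>
    have := hdisj T hT hTr
    have := card_filter_add_card_filter_not (s := D) (fun u => Disjoint u T)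
    omega
  | succ m ih =>
    obtain ⟨u, hu⟩ : ∃ u ∈ D, Disjoint u T := by
      simpa [Finset.Nonempty] using card_pos.1 (hk.trans_le (hdisj T hT hTr))
    obtain ⟨x, hx⟩ := hD u hu.1
    have hxT : x ∉ T := disjoint_left.1 hu.2 hx
    have hgrow := card_filter_not_disjoint_lt_insert hu.1 hu.2 hx
    have := ih (insert_subset (hDS u hu.1 hx) hT) (by rw [card_insert_of_notMem hxT]; omega)
      (by rw [card_insert_of_notMem hxT]; omega)
    omega

end Transversal

lemma mem_kneserVerts {n r : ℕ} {v : Finset ℕ} :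
    v ∈ KneserVerts n r ↔ v ⊆ Icc 1 n ∧ #v = r := mem_powersetCard

lemma le_of_mem_kneserVerts {n r : ℕ} {v : Finset ℕ} (hv : v ∈ KneserVerts n r) :
    r ≤ n := by
  obtain ⟨hvI, hvr⟩ := mem_kneserVerts.1 hv
  simpa [hvr] using card_le_card hvI

namespace IsKTupleTotalDomSet

variable {n r k : ℕ} {D : Finset (Finset ℕ)}

lemma le_card_filter_disjoint (hD : IsKTupleTotalDomSet n r k D) (hrn : r ≤ n)
    {T : Finset ℕ} (hT : T ⊆ Icc 1 n) (hTr : #T ≤ r) : k ≤ #{u ∈ D | Disjoint u T} := by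
  obtain ⟨v, hTv, hvI, hvr⟩ := exists_subsuperset_card_eq hT hTr (by simpa using hrn)
  refine (hD.2 v (mem_kneserVerts.2 ⟨hvI, hvr⟩)).trans (card_le_card ?_)
  exact monotone_filter_right D fun u _ hvu => hvu.2.symm.mono_right hTv

lemma card_filter_not_disjoint_add_le (hD : IsKTupleTotalDomSet n r k D) (hr : 0 < r)
    (hrn : r ≤ n) (hk : 0 < k) {T : Finset ℕ} (hT : T ⊆ Icc 1 n) (hTr : #T ≤ r) :
    #{u ∈ D | ¬Disjoint u T} + (r - #T) + k ≤ #D :=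
  _root_.card_filter_not_disjoint_add_le (fun _ hu => (mem_kneserVerts.1 (hD.1 hu)).1)
    (fun _ hu => card_pos.1 <| (mem_kneserVerts.1 (hD.1 hu)).2 ▸ hr) hk
    (fun _ => hD.le_card_filter_disjoint hrn) hT hTr

lemma add_le_card (hD : IsKTupleTotalDomSet n r k D) (hr : 0 < r) (hrn : r ≤ n)
    (hk : 0 < k) : k + r ≤ #D := by
  have := hD.card_filter_not_disjoint_add_le hr hrn hk (empty_subset _) (by simp)
  simp only [disjoint_empty_right, not_true_eq_false, filter_false, card_empty,
    tsub_zero] at this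
  omega

lemma isKneserClique_of_card_eq (hD : IsKTupleTotalDomSet n r k D) (hr : 0 < r) (hrn : r ≤ n)
    (hk : 0 < k) (hcard : #D = k + r) : IsKneserClique D := by
  intro u hu w hw huw
  by_contra hnd
  obtain ⟨x, hxu, hxw⟩ := not_disjoint_iff.1 hnd
  have hx : {x} ⊆ Icc 1 n := singleton_subset_iff.2 ((mem_kneserVerts.1 (hD.1 hu)).1 hxu)
  have hbound := hD.card_filter_not_disjoint_add_le hr hrn hk hx (by rwa [card_singleton])
  have hmeet : {u, w} ⊆ D.filter fun v => ¬Disjoint v {x} := by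
    simp [insert_subset_iff, hu, hw, hxu, hxw]
  have := card_le_card hmeet
  rw [card_pair huw] at this
  rw [card_singleton] at hbound
  omega

end IsKTupleTotalDomSet

namespace IsKneserClique

variable {D : Finset (Finset ℕ)}

lemma card_filter_not_disjoint_le (hD : IsKneserClique D) (v : Finset ℕ) :
    #{u ∈ D | ¬Disjoint v u} ≤ #v := by
  refine (card_le_card_biUnion (f := (v ∩ ·)) ?_ ?_).trans (card_le_card ?_)
  · intro u hu w hw huw
    exact (hD u (mem_filter.1 hu).1 w (mem_filter.1 hw).1 huw).mono inter_subset_right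
      inter_subset_right
  · intro u hu
    exact not_disjoint_iff_nonempty_inter.1 (mem_filter.1 hu).2
  · exact biUnion_subset.2 fun _ _ => inter_subset_left

lemma card_mul_le {n r : ℕ} (hD : IsKneserClique D) (hDV : D ⊆ KneserVerts n r) :
    #D * r ≤ n := by
  have hunion : D.biUnion id ⊆ Icc 1 n :=
    biUnion_subset.2 fun u hu => (mem_kneserVerts.1 (hDV hu)).1
  calc #D * r = ∑ u ∈ D, #u :=
        (sum_const_nat fun u hu => (mem_kneserVerts.1 (hDV hu)).2).symm
    _ = #(D.biUnion id) := (card_biUnion hD).symm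
    _ ≤ #(Icc 1 n) := card_le_card hunion
    _ = n := by simp

lemma isKTupleTotalDomSet {n r k : ℕ} (hD : IsKneserClique D) (hDV : D ⊆ KneserVerts n r)
    (hr : 0 < r) (hcard : k + r ≤ #D) : IsKTupleTotalDomSet n r k D := by
  refine ⟨hDV, fun v hv => ?_⟩
  have hvr := (mem_kneserVerts.1 hv).2
  have hdisj_adj : (D.filter fun u => Disjoint v u) ⊆ D.filter fun u => KneserAdj v u := by
    refine monotone_filter_right D fun u _ hvu => ⟨?_, hvu⟩
    rintro rfl
    exact (card_pos.1 (hvr ▸ hr)).ne_empty (disjoint_self.1 hvu)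
  have := card_le_card hdisj_adj
  have := hD.card_filter_not_disjoint_le v
  have := card_filter_add_card_filter_not (s := D) (fun u => Disjoint v u)
  omega

end IsKneserClique

lemma exists_isKneserClique_card_eq {n r m : ℕ} (hr : 0 < r) (hn : m * r ≤ n) :
    ∃ D ⊆ KneserVerts n r, IsKneserClique D ∧ #D = m := by
  set block : ℕ → Finset ℕ := fun i => Ioc (i * r) ((i + 1) * r)
  have hcard (i : ℕ) : #(block i) = r := by simp [block, add_mul]
  have hdisj (i j : ℕ) (hij : i ≠ j) : Disjoint (block i) (block j) := by
    rcases hij.lt_or_gt with h | h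
    · exact Ioc_disjoint_Ioc_of_le (Nat.mul_le_mul_right r h)
    · exact (Ioc_disjoint_Ioc_of_le (Nat.mul_le_mul_right r h)).symm
  have hinj : Function.Injective block := by
    intro i j h
    by_contra hij
    have := hdisj i j hij
    rw [h, disjoint_self, bot_eq_empty, ← card_eq_zero, hcard] at this
    omega
  refine ⟨(range m).image block, ?_, ?_, by rw [card_image_of_injective _ hinj, card_range]⟩
  · simp only [image_subset_iff, mem_range, mem_kneserVerts, hcard, and_true]
    intro i hi x hx
    have : (i + 1) * r ≤ m * r := Nat.mul_le_mul_right r hi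
    simp only [block, mem_Ioc, mem_Icc] at hx ⊢
    omega
  · simp only [IsKneserClique, mem_image, mem_range]
    rintro _ ⟨i, -, rfl⟩ _ ⟨j, -, rfl⟩ hij
    exact hdisj i j fun h => hij (h ▸ rfl)

lemma ktupleTotalDomNum_eq {n r k : ℕ} (hr : 0 < r) (hk : 0 < k) (hn : r * (k + r) ≤ n) :
    ktupleTotalDomNum n r k = k + r := by
  have hrn : r ≤ n := (Nat.le_mul_of_pos_right r (by omega)).trans hn
  obtain ⟨D, hDV, hD, hcard⟩ := exists_isKneserClique_card_eq (n := n) (m := k + r) hr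
    (by rwa [mul_comm] at hn)
  have hdom := hD.isKTupleTotalDomSet hDV hr hcard.ge
  refine le_antisymm (Nat.sInf_le ⟨D, hdom, hcard⟩) (le_csInf ⟨_, D, hdom, hcard⟩ ?_)
  rintro _ ⟨E, hE, rfl⟩
  exact hE.add_le_card hr hrn hk

lemma exists_isKTupleTotalDomSet_card_eq_ktupleTotalDomNum {n r k : ℕ}
    (h : ktupleTotalDomNum n r k ≠ 0) :
    ∃ D, IsKTupleTotalDomSet n r k D ∧ #D = ktupleTotalDomNum n r k := by
  refine Nat.sInf_mem (s := {m | ∃ D, IsKTupleTotalDomSet n r k D ∧ #D = m})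
    (Set.nonempty_iff_ne_empty.2 fun hempty => h ?_)
  rw [ktupleTotalDomNum, hempty, Nat.sInf_empty]

theorem stmt_3_general (n r k : ℕ) (hr : 1 ≤ r) (hk : 1 ≤ k) :
    (ktupleTotalDomNum n r k = k + r ↔ r * (k + r) ≤ n) ∧
    (r * (k + r) ≤ n → ∀ D : Finset (Finset ℕ), IsKTupleTotalDomSet n r k D →
      D.card = ktupleTotalDomNum n r k → IsKneserClique D) := by
  refine ⟨⟨fun hγ => ?_, ktupleTotalDomNum_eq hr hk⟩, fun hn D hD hcard => ?_⟩
  · obtain ⟨D, hD, hcard⟩ :=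
      exists_isKTupleTotalDomSet_card_eq_ktupleTotalDomNum (n := n) (r := r) (k := k) (by omega)
    rw [hγ] at hcard
    obtain ⟨u, hu⟩ := card_pos.1 (by omega : 0 < #D)
    have hclique := hD.isKneserClique_of_card_eq hr (le_of_mem_kneserVerts (hD.1 hu)) hk hcard
    simpa [hcard, mul_comm] using hclique.card_mul_le hD.1
  · rw [ktupleTotalDomNum_eq hr hk hn] at hcard
    have hrn : r ≤ n := (Nat.le_mul_of_pos_right r (by omega)).trans hn
    exact hD.isKneserClique_of_card_eq hr hrn hk hcard

theorem stmt_3 (n r k : ℕ) (hr : 1 ≤ r) (hk : 1 ≤ k) (hn : 2 * r ≤ n) :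
    (ktupleTotalDomNum n r k = k + r ↔ r * (k + r) ≤ n) ∧
    (r * (k + r) ≤ n → ∀ D : Finset (Finset ℕ), IsKTupleTotalDomSet n r k D →
      D.card = ktupleTotalDomNum n r k → IsKneserClique D) :=
  stmt_3_general n r k hr hk
end

section
/- For every k ≥ 2 and r ≥ 2, with n = r(k+r) − 1, the set D = A ∪ B, where A = {[1..r], [1..r−1]∪{r+1}, [r..2r−1]} and B = {[2r..3r−1], [3r..4r−1], ..., [(k+r−1)r..(k+r)r−1]}, is a k-tuple total dominating set of the Kneser graph K(n,r) of cardinality k+r+1. -/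
open Finset

/-! A vertex `v` is adjacent to exactly the members of `D = A ∪ B` it is disjoint from, so it
suffices that `v` meets at most `r + 1` of them. The blocks `block r i` forming `B` are pairwise
disjoint and lie in `[2r, ∞)`, so `v` meets at most `|v ∩ [2r, ∞)|` of them. The three sets of
`A = lowTriple r` lie in `[1, 2r - 1]` and no point lies in all three, so `v` meets at most
`min 3 (2a) ≤ a + 1` of them, where `a = |v ∩ [1, 2r - 1]|`. As `|v| = r`, this totals `r + 1`. -/

theorem card_filter_not_disjoint_le_mul {α : Type*} [DecidableEq α] {F : Finset (Finset α)}
    {p : α → Prop} [DecidablePred p] {m : ℕ} (v : Finset α) (hF : ∀ u ∈ F, ∀ x ∈ u, p x)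
    (hm : ∀ x, #{u ∈ F | x ∈ u} ≤ m) :
    #{u ∈ F | ¬Disjoint v u} ≤ #{x ∈ v | p x} * m := by
  have key := card_mul_le_card_mul (fun u x => x ∈ u) (s := {u ∈ F | ¬Disjoint v u})
    (t := {x ∈ v | p x}) (m := 1) (n := m) ?_ ?_
  · simpa using key
  · intro u hu
    obtain ⟨huF, hvu⟩ := mem_filter.1 hu
    obtain ⟨x, hxv, hxu⟩ := not_disjoint_iff.1 hvu
    exact one_le_card.2 ⟨x, by simp [bipartiteAbove, hxv, hF u huF x hxu, hxu]⟩
  · intro x _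
    refine (card_le_card fun u hu => ?_).trans (hm x)
    simp only [bipartiteBelow, mem_filter] at hu ⊢
    exact ⟨hu.1.1, hu.2⟩

lemma kneserAdj_iff_disjoint {u v : Finset ℕ} (hv : v.Nonempty) :
    KneserAdj v u ↔ Disjoint v u :=
  ⟨And.right, fun h => ⟨fun hvu => hv.ne_empty (disjoint_self_iff_empty _ |>.1 (hvu ▸ h)), h⟩⟩

lemma isKTupleTotalDomSet_of_card_filter_not_disjoint_le {n r k : ℕ} {D : Finset (Finset ℕ)}
    (hr : 0 < r) (hD : D ⊆ KneserVerts n r)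
    (h : ∀ v ∈ KneserVerts n r, #{u ∈ D | ¬Disjoint v u} + k ≤ #D) :
    IsKTupleTotalDomSet n r k D := by
  refine ⟨hD, fun v hv => ?_⟩
  have hvne : v.Nonempty := card_pos.1 ((mem_powersetCard.1 hv).2 ▸ hr)
  have hsplit := card_filter_add_card_filter_not (s := D) (p := fun u => Disjoint v u)
  simp only [kneserAdj_iff_disjoint hvne]
  have hv_le := h v hv
  omega

def block (r i : ℕ) : Finset ℕ := Icc (i * r) ((i + 1) * r - 1)

lemma mem_block_iff {r i x : ℕ} (hr : 0 < r) : x ∈ block r i ↔ x / r = i := by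
  rw [Nat.div_eq_iff hr, block, mem_Icc, add_mul, one_mul]

lemma card_block {r : ℕ} (hr : 0 < r) (i : ℕ) : #(block r i) = r := by
  rw [block, Nat.card_Icc, add_mul, one_mul]
  omega

lemma block_injective {r : ℕ} (hr : 0 < r) : Function.Injective (block r) := by
  intro i j hij
  have hi : i * r ∈ block r i := (mem_block_iff hr).2 (Nat.mul_div_cancel i hr)
  rw [hij, mem_block_iff hr, Nat.mul_div_cancel i hr] at hi
  exact hi

lemma card_filter_mem_image_block_le_one {r : ℕ} (hr : 0 < r) (I : Finset ℕ) (x : ℕ) :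
    #{u ∈ I.image (block r) | x ∈ u} ≤ 1 := by
  refine card_le_one.2 fun u hu w hw => ?_
  simp only [mem_filter, mem_image] at hu hw
  obtain ⟨⟨i, -, rfl⟩, hxi⟩ := hu
  obtain ⟨⟨j, -, rfl⟩, hxj⟩ := hw
  rw [← (mem_block_iff hr).1 hxi, ← (mem_block_iff hr).1 hxj]

lemma le_of_mem_block {r i x : ℕ} (hi : 2 ≤ i) (hx : x ∈ block r i) : 2 * r ≤ x :=
  (Nat.mul_le_mul_right r hi).trans (mem_Icc.1 hx).1

def lowTriple (r : ℕ) : Finset (Finset ℕ) :=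
  {Icc 1 r, insert (r + 1) (Icc 1 (r - 1)), Icc r (2 * r - 1)}

section lowTriple

variable {r : ℕ}

lemma subset_Icc_of_mem_lowTriple (hr : 2 ≤ r) {u : Finset ℕ} (hu : u ∈ lowTriple r) :
    u ⊆ Icc 1 (2 * r - 1) := by
  intro x hx
  simp only [lowTriple, mem_insert, mem_singleton] at hu
  rcases hu with rfl | rfl | rfl <;> simp only [mem_insert, mem_Icc] at hx ⊢ <;> omega

lemma card_of_mem_lowTriple (hr : 2 ≤ r) {u : Finset ℕ} (hu : u ∈ lowTriple r) : #u = r := by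
  simp only [lowTriple, mem_insert, mem_singleton] at hu
  rcases hu with rfl | rfl | rfl
  · simp
  · rw [card_insert_of_notMem (by simp), Nat.card_Icc]
    omega
  · rw [Nat.card_Icc]
    omega

lemma card_lowTriple (hr : 2 ≤ r) : #(lowTriple r) = 3 := by
  refine card_eq_three.2 ⟨_, _, _, ?_, ?_, ?_, rfl⟩ <;> intro h
  · have : r ∈ Icc 1 r := by simp; omega
    simp [h] at this
    omega
  · have : 1 ∈ Icc 1 r := by simp; omega
    simp [h] at this
    omega
  · have : 1 ∈ insert (r + 1) (Icc 1 (r - 1)) := by simp; omega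
    simp [h] at this
    omega

lemma card_filter_mem_lowTriple_le_two (hr : 2 ≤ r) (x : ℕ) : #{u ∈ lowTriple r | x ∈ u} ≤ 2 := by
  have hlt : {u ∈ lowTriple r | x ∈ u} ⊂ lowTriple r := by
    refine filter_ssubset.2 ?_
    by_cases hxr : x = r
    · exact ⟨insert (r + 1) (Icc 1 (r - 1)), by simp [lowTriple], by simp; omega⟩
    · refine ⟨if x < r then Icc r (2 * r - 1) else Icc 1 r, ?_, ?_⟩
      · split_ifs <;> simp [lowTriple]
      · split_ifs <;> simp <;> omega
  have := card_lt_card hlt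
  rw [card_lowTriple hr] at this
  omega

end lowTriple

lemma card_filter_not_disjoint_lowTriple_union_le {r N : ℕ} (hr : 2 ≤ r) {v : Finset ℕ}
    (hv : #v = r) : #{u ∈ lowTriple r ∪ (Icc 2 N).image (block r) | ¬Disjoint v u} ≤ r + 1 := by
  have hlow : #{u ∈ lowTriple r | ¬Disjoint v u} ≤ #{x ∈ v | x < 2 * r} * 2 :=
    card_filter_not_disjoint_le_mul v
      (fun u hu x hx => by have := mem_Icc.1 (subset_Icc_of_mem_lowTriple hr hu hx); omega)
      (card_filter_mem_lowTriple_le_two hr)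
  have hlow' : #{u ∈ lowTriple r | ¬Disjoint v u} ≤ 3 :=
    (card_filter_le _ _).trans (card_lowTriple hr).le
  have hhigh : #{u ∈ (Icc 2 N).image (block r) | ¬Disjoint v u} ≤ #{x ∈ v | ¬x < 2 * r} * 1 :=
    card_filter_not_disjoint_le_mul v
      (fun u hu x hx => by
        obtain ⟨i, hi, rfl⟩ := mem_image.1 hu
        exact not_lt.2 (le_of_mem_block (mem_Icc.1 hi).1 hx))
      (card_filter_mem_image_block_le_one (by omega) _)
  have hsplit := card_filter_add_card_filter_not (s := v) (p := fun x => x < 2 * r)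
  rw [filter_union]
  refine (card_union_le _ _).trans ?_
  omega

lemma card_lowTriple_union_blocks {r N : ℕ} (hr : 2 ≤ r) (hN : 1 ≤ N) :
    #(lowTriple r ∪ (Icc 2 N).image (block r)) = N + 2 := by
  have hdisj : Disjoint (lowTriple r) ((Icc 2 N).image (block r)) := by
    refine disjoint_left.2 fun u hlow hhigh => ?_
    obtain ⟨i, hi, rfl⟩ := mem_image.1 hhigh
    have hmem : i * r ∈ block r i := by simp [block, add_mul]; omega
    have := mem_Icc.1 (subset_Icc_of_mem_lowTriple hr hlow hmem)
    have := le_of_mem_block (mem_Icc.1 hi).1 hmem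
    omega
  rw [card_union_of_disjoint hdisj, card_lowTriple hr,
    card_image_of_injective _ (block_injective (by omega)), Nat.card_Icc]
  omega

lemma lowTriple_union_blocks_subset {k r : ℕ} (hr : 2 ≤ r) :
    lowTriple r ∪ (Icc 2 (k + r - 1)).image (block r) ⊆ KneserVerts (r * (k + r) - 1) r := by
  have hrr : 2 * r ≤ r * (k + r) := by nlinarith
  intro u hu
  refine mem_powersetCard.2 ?_
  rcases mem_union.1 hu with hlow | hhigh
  · refine ⟨(subset_Icc_of_mem_lowTriple hr hlow).trans (Icc_subset_Icc le_rfl (by omega)),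
      card_of_mem_lowTriple hr hlow⟩
  · obtain ⟨i, hi, rfl⟩ := mem_image.1 hhigh
    refine ⟨fun x hx => ?_, card_block (by omega) i⟩
    have hlo := le_of_mem_block (mem_Icc.1 hi).1 hx
    have hhi : (i + 1) * r ≤ r * (k + r) := by
      rw [mul_comm r]; exact Nat.mul_le_mul_right r (by have := mem_Icc.1 hi; omega)
    have := (mem_Icc.1 hx).2
    exact mem_Icc.2 ⟨by omega, by omega⟩

theorem stmt_7_general (k r : ℕ) (hr : 2 ≤ r) :
    IsKTupleTotalDomSet (r * (k + r) - 1) r k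
      (({Finset.Icc 1 r, insert (r + 1) (Finset.Icc 1 (r - 1)),
          Finset.Icc r (2 * r - 1)} : Finset (Finset ℕ)) ∪
        (Finset.Icc 2 (k + r - 1)).image fun i => Finset.Icc (i * r) ((i + 1) * r - 1)) ∧
    (({Finset.Icc 1 r, insert (r + 1) (Finset.Icc 1 (r - 1)),
          Finset.Icc r (2 * r - 1)} : Finset (Finset ℕ)) ∪
        (Finset.Icc 2 (k + r - 1)).image fun i =>
          Finset.Icc (i * r) ((i + 1) * r - 1)).card = k + r + 1 := by
  change IsKTupleTotalDomSet _ r k (lowTriple r ∪ (Icc 2 (k + r - 1)).image (block r)) ∧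
    #(lowTriple r ∪ (Icc 2 (k + r - 1)).image (block r)) = k + r + 1
  have hcard := card_lowTriple_union_blocks (N := k + r - 1) hr (by omega)
  refine ⟨isKTupleTotalDomSet_of_card_filter_not_disjoint_le (by omega)
    (lowTriple_union_blocks_subset hr) fun v hv => ?_, by omega⟩
  have := card_filter_not_disjoint_lowTriple_union_le (N := k + r - 1) hr
    (mem_powersetCard.1 hv).2
  omega

theorem stmt_7 (k r : ℕ) (hk : 2 ≤ k) (hr : 2 ≤ r) :
    IsKTupleTotalDomSet (r * (k + r) - 1) r k
      (({Finset.Icc 1 r, insert (r + 1) (Finset.Icc 1 (r - 1)),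
          Finset.Icc r (2 * r - 1)} : Finset (Finset ℕ)) ∪
        (Finset.Icc 2 (k + r - 1)).image fun i => Finset.Icc (i * r) ((i + 1) * r - 1)) ∧
    (({Finset.Icc 1 r, insert (r + 1) (Finset.Icc 1 (r - 1)),
          Finset.Icc r (2 * r - 1)} : Finset (Finset ℕ)) ∪
        (Finset.Icc 2 (k + r - 1)).image fun i =>
          Finset.Icc (i * r) ((i + 1) * r - 1)).card = k + r + 1 :=
  stmt_7_general k r hr
end

section
/- For every r ≥ 10, the 2-packing number of the Kneser graph K(3r−3, r) equals 3. -/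
open Finset

lemma mem_KV {n r : ℕ} {u : Finset ℕ} :
    u ∈ KneserVerts n r ↔ u ⊆ Finset.Icc 1 n ∧ u.card = r := by
  simp [KneserVerts, Finset.mem_powersetCard]

lemma no_common_of_big_union {n r : ℕ} {u v : Finset ℕ}
    (hu : u ⊆ Finset.Icc 1 n) (hv : v ⊆ Finset.Icc 1 n)
    (h : n < (u ∪ v).card + r) :
    ∀ w ∈ KneserVerts n r, ¬ (KneserAdj u w ∧ KneserAdj w v) := by
  rintro w hw ⟨⟨_, hdu⟩, ⟨_, hdv⟩⟩
  rw [mem_KV] at hw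
  have hd : Disjoint (u ∪ v) w := by
    rw [Finset.disjoint_union_left]; exact ⟨hdu, hdv.symm⟩
  have hsub : (u ∪ v) ∪ w ⊆ Finset.Icc 1 n :=
    Finset.union_subset (Finset.union_subset hu hv) hw.1
  have := Finset.card_le_card hsub
  rw [Finset.card_union_of_disjoint hd, Nat.card_Icc, hw.2] at this
  omega

lemma inter_le_two {r : ℕ} (hr : 10 ≤ r) {u v : Finset ℕ}
    (hu : u ∈ KneserVerts (3*r-3) r) (hv : v ∈ KneserVerts (3*r-3) r)
    (hno : ∀ w ∈ KneserVerts (3*r-3) r, ¬ (KneserAdj u w ∧ KneserAdj w v)) :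
    (u ∩ v).card ≤ 2 := by
  by_contra h
  push_neg at h
  rw [mem_KV] at hu hv
  have hcu : (u ∪ v).card + (u ∩ v).card = r + r := by
    rw [Finset.card_union_add_card_inter, hu.2, hv.2]
  have hsub : u ∪ v ⊆ Finset.Icc 1 (3*r-3) := Finset.union_subset hu.1 hv.1
  have hscard : (Finset.Icc 1 (3*r-3) \ (u ∪ v)).card = (3*r-3) - (u ∪ v).card := by
    rw [Finset.card_sdiff_of_subset hsub, Nat.card_Icc]; omega
  have hle : (u ∪ v).card ≤ 3*r-3 := by
    have := Finset.card_le_card hsub; rw [Nat.card_Icc] at this; omega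
  have hrle : r ≤ (Finset.Icc 1 (3*r-3) \ (u ∪ v)).card := by omega
  obtain ⟨w, hws, hwc⟩ := Finset.exists_subset_card_eq hrle
  have hwK : w ∈ KneserVerts (3*r-3) r :=
    mem_KV.2 ⟨hws.trans Finset.sdiff_subset, hwc⟩
  have hdisj : Disjoint w (u ∪ v) :=
    (Finset.sdiff_disjoint.mono_left hws)
  have hdu : Disjoint u w := (hdisj.symm.mono_left Finset.subset_union_left)
  have hdv : Disjoint w v := hdisj.mono_right Finset.subset_union_right
  have hneu : u ≠ w := by
    intro he
    have : u = ∅ := disjoint_self.mp (he ▸ hdu)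
    rw [this] at hu; simp at hu; omega
  have hnev : w ≠ v := by
    intro he
    have : v = ∅ := disjoint_self.mp (he ▸ hdv)
    rw [this] at hv; simp at hv; omega
  exact hno w hwK ⟨⟨hneu, hdu⟩, ⟨hnev, hdv⟩⟩

lemma packing_card_le {r : ℕ} (hr : 10 ≤ r) {S : Finset (Finset ℕ)}
    (hS : IsTwoPacking (3*r-3) r S) : S.card ≤ 3 := by
  by_contra h
  push_neg at h
  obtain ⟨T, hTS, hT⟩ := Finset.exists_subset_card_eq (by omega : 4 ≤ S.card)
  obtain ⟨a, ha⟩ : T.Nonempty := by rw [← Finset.card_pos, hT]; norm_num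
  obtain ⟨b, c, d, hbc, hbd, hcd, habc⟩ := Finset.card_eq_three.mp
    (by rw [Finset.card_erase_of_mem ha, hT] : (T.erase a).card = 3)
  have hbT : b ∈ T.erase a := by rw [habc]; simp
  have hcT : c ∈ T.erase a := by rw [habc]; simp
  have hdT : d ∈ T.erase a := by rw [habc]; simp
  have hab : a ≠ b := fun he => (Finset.mem_erase.1 hbT).1 he.symm
  have hac : a ≠ c := fun he => (Finset.mem_erase.1 hcT).1 he.symm
  have had : a ≠ d := fun he => (Finset.mem_erase.1 hdT).1 he.symm
  have haS : a ∈ S := hTS ha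
  have hbS : b ∈ S := hTS (Finset.mem_of_mem_erase hbT)
  have hcS : c ∈ S := hTS (Finset.mem_of_mem_erase hcT)
  have hdS : d ∈ S := hTS (Finset.mem_of_mem_erase hdT)
  have key : ∀ u ∈ S, ∀ v ∈ S, u ≠ v → (u ∩ v).card ≤ 2 := fun u hu v hv hne =>
    inter_le_two hr (hS.1 hu) (hS.1 hv) (hS.2 u hu v hv hne).2
  have cA := (mem_KV.1 (hS.1 haS)).2
  have cB := (mem_KV.1 (hS.1 hbS)).2
  have cC := (mem_KV.1 (hS.1 hcS)).2
  have cD := (mem_KV.1 (hS.1 hdS)).2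
  have h1 : (a ∪ b).card + (a ∩ b).card = a.card + b.card :=
    Finset.card_union_add_card_inter a b
  have h2 : ((a ∪ b) ∪ c).card + ((a ∪ b) ∩ c).card = (a ∪ b).card + c.card :=
    Finset.card_union_add_card_inter _ _
  have h3 : (((a ∪ b) ∪ c) ∪ d).card + (((a ∪ b) ∪ c) ∩ d).card = ((a ∪ b) ∪ c).card + d.card :=
    Finset.card_union_add_card_inter _ _
  have e2 : ((a ∪ b) ∩ c).card ≤ (a ∩ c).card + (b ∩ c).card := by
    rw [Finset.union_inter_distrib_right]; exact Finset.card_union_le _ _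
  have e3 : (((a ∪ b) ∪ c) ∩ d).card ≤ (a ∩ d).card + (b ∩ d).card + (c ∩ d).card := by
    rw [Finset.union_inter_distrib_right, Finset.union_inter_distrib_right]
    calc _ ≤ (a ∩ d ∪ b ∩ d).card + (c ∩ d).card := Finset.card_union_le _ _
      _ ≤ (a ∩ d).card + (b ∩ d).card + (c ∩ d).card := by
          have := Finset.card_union_le (a ∩ d) (b ∩ d); omega
  have top : (((a ∪ b) ∪ c) ∪ d).card ≤ 3*r-3 := by
    have hsub : ((a ∪ b) ∪ c) ∪ d ⊆ Finset.Icc 1 (3*r-3) := by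
      refine Finset.union_subset (Finset.union_subset (Finset.union_subset ?_ ?_) ?_) ?_ <;>
        exact (mem_KV.1 (hS.1 (by assumption))).1
    have := Finset.card_le_card hsub
    rwa [Nat.card_Icc] at this
  have kab := key a haS b hbS hab
  have kac := key a haS c hcS hac
  have kad := key a haS d hdS had
  have kbc := key b hbS c hcS hbc
  have kbd := key b hbS d hdS hbd
  have kcd := key c hcS d hdS hcd
  omega

lemma pair_ok {r : ℕ} (hr : 10 ≤ r) {u v : Finset ℕ}
    (hu : u ∈ KneserVerts (3*r-3) r) (hv : v ∈ KneserVerts (3*r-3) r)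
    (hint : (u ∩ v).card = 1) :
    ¬ KneserAdj u v ∧ ∀ w ∈ KneserVerts (3*r-3) r, ¬ (KneserAdj u w ∧ KneserAdj w v) := by
  rw [mem_KV] at hu hv
  have h1 : (u ∪ v).card + (u ∩ v).card = r + r := by
    rw [Finset.card_union_add_card_inter, hu.2, hv.2]
  constructor
  · rintro ⟨hne, hd⟩
    rw [Finset.disjoint_iff_inter_eq_empty] at hd
    rw [hd] at hint; simp at hint
  · exact no_common_of_big_union hu.1 hv.1 (by omega)
theorem stmt_10 (r : ℕ) (hr : 10 ≤ r) : twoPackingNum (3 * r - 3) r = 3 := by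
  set A : Finset ℕ := Finset.Icc 1 r with hA
  set B : Finset ℕ := Finset.Icc r (2*r-1) with hB
  set C : Finset ℕ := insert 1 (insert (2*r-1) (Finset.Icc (2*r) (3*r-3))) with hC
  have memC : ∀ x, x ∈ C ↔ x = 1 ∨ x = 2*r-1 ∨ (2*r ≤ x ∧ x ≤ 3*r-3) := by
    intro x; simp [hC, Finset.mem_Icc]
  have hAK : A ∈ KneserVerts (3*r-3) r := by
    rw [mem_KV]
    refine ⟨Finset.Icc_subset_Icc le_rfl (by omega), ?_⟩
    rw [Nat.card_Icc]; omega
  have hBK : B ∈ KneserVerts (3*r-3) r := by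
    rw [mem_KV]
    refine ⟨Finset.Icc_subset_Icc (by omega) (by omega), ?_⟩
    rw [Nat.card_Icc]; omega
  have hCK : C ∈ KneserVerts (3*r-3) r := by
    rw [mem_KV]
    constructor
    · intro x hx
      rw [memC] at hx
      rw [Finset.mem_Icc]
      omega
    · rw [hC, Finset.card_insert_of_notMem, Finset.card_insert_of_notMem, Nat.card_Icc]
      · omega
      · rw [Finset.mem_Icc]; omega
      · simp [Finset.mem_Icc]; omega
  have iAB : (A ∩ B).card = 1 := by
    have : A ∩ B = {r} := by
      ext x
      simp only [Finset.mem_inter, hA, hB, Finset.mem_Icc, Finset.mem_singleton]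
      omega
    rw [this, Finset.card_singleton]
  have iAC : (A ∩ C).card = 1 := by
    have : A ∩ C = {1} := by
      ext x
      simp only [Finset.mem_inter, hA, Finset.mem_Icc, Finset.mem_singleton, memC]
      omega
    rw [this, Finset.card_singleton]
  have iBC : (B ∩ C).card = 1 := by
    have : B ∩ C = {2*r-1} := by
      ext x
      simp only [Finset.mem_inter, hB, Finset.mem_Icc, Finset.mem_singleton, memC]
      omega
    rw [this, Finset.card_singleton]
  have hABne : A ≠ B := by
    intro h
    have h1 : (1:ℕ) ∈ A := by rw [hA, Finset.mem_Icc]; omega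
    rw [h, hB, Finset.mem_Icc] at h1; omega
  have hACne : A ≠ C := by
    intro h
    have h1 : (2:ℕ) ∈ A := by rw [hA, Finset.mem_Icc]; omega
    rw [h, memC] at h1; omega
  have hBCne : B ≠ C := by
    intro h
    have h1 : r + 1 ∈ B := by rw [hB, Finset.mem_Icc]; omega
    rw [h, memC] at h1; omega
  have hpack : IsTwoPacking (3*r-3) r {A, B, C} := by
    constructor
    · intro u hu
      simp only [Finset.mem_insert, Finset.mem_singleton] at hu
      rcases hu with rfl | rfl | rfl <;> assumption
    · intro u hu v hv hne
      simp only [Finset.mem_insert, Finset.mem_singleton] at hu hv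
      have sAB := pair_ok hr hAK hBK iAB
      have sBA := pair_ok hr hBK hAK (by rwa [Finset.inter_comm])
      have sAC := pair_ok hr hAK hCK iAC
      have sCA := pair_ok hr hCK hAK (by rwa [Finset.inter_comm])
      have sBC := pair_ok hr hBK hCK iBC
      have sCB := pair_ok hr hCK hBK (by rwa [Finset.inter_comm])
      rcases hu with rfl | rfl | rfl <;> rcases hv with rfl | rfl | rfl <;>
        first
          | exact absurd rfl hne
          | assumption
  have hcard : ({A, B, C} : Finset (Finset ℕ)).card = 3 := by
    rw [Finset.card_insert_of_notMem (by simp [hABne, hACne]),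
        Finset.card_insert_of_notMem (by simp [hBCne])]
    rfl
  have hmem : 3 ∈ {m | ∃ S, IsTwoPacking (3*r-3) r S ∧ S.card = m} :=
    ⟨{A, B, C}, hpack, hcard⟩
  have hup : ∀ m ∈ {m | ∃ S, IsTwoPacking (3*r-3) r S ∧ S.card = m}, m ≤ 3 := by
    rintro m ⟨S, hS, rfl⟩
    exact packing_card_le hr hS
  unfold twoPackingNum
  exact le_antisymm (csSup_le ⟨3, hmem⟩ hup) (le_csSup ⟨3, hup⟩ hmem)
end

section
/- For positive integers n and r with n ≥ 2r+2, ρ_2(K(n+1, r+1)) ≥ ρ_2(K(n, r)). -/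
open Finset

lemma lift_packing (n r : ℕ) (hr : 1 ≤ r) (S : Finset (Finset ℕ))
    (hS : IsTwoPacking n r S) :
    IsTwoPacking (n + 1) (r + 1) (S.image (insert (n + 1))) ∧
      (S.image (insert (n + 1))).card = S.card := by
  have hmem : ∀ u ∈ S, u ⊆ Finset.Icc 1 n ∧ u.card = r := by
    intro u hu
    have := hS.1 hu
    simpa [KneserVerts, Finset.mem_powersetCard] using this
  have hnotmem : ∀ u ∈ S, (n + 1) ∉ u := by
    intro u hu h
    have := (hmem u hu).1 h
    simp [Finset.mem_Icc] at this
  have hinj : ∀ u ∈ S, ∀ v ∈ S, insert (n + 1) u = insert (n + 1) v → u = v := by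
    intro u hu v hv h
    have : (insert (n + 1) u).erase (n + 1) = (insert (n + 1) v).erase (n + 1) := by
      rw [h]
    rwa [Finset.erase_insert (hnotmem u hu), Finset.erase_insert (hnotmem v hv)] at this
  constructor
  · constructor
    · intro x hx
      simp only [Finset.mem_image] at hx
      obtain ⟨u, hu, rfl⟩ := hx
      obtain ⟨hsub, hcard⟩ := hmem u hu
      simp only [KneserVerts, Finset.mem_powersetCard]
      constructor
      · intro a ha
        rcases Finset.mem_insert.1 ha with rfl | ha
        · simp [Finset.mem_Icc]
        · have := hsub ha; simp only [Finset.mem_Icc] at this ⊢; omega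
      · rw [Finset.card_insert_of_notMem (hnotmem u hu), hcard]
    · intro u' hu' v' hv' hne
      simp only [Finset.mem_image] at hu' hv'
      obtain ⟨u, hu, rfl⟩ := hu'
      obtain ⟨v, hv, rfl⟩ := hv'
      have huv : u ≠ v := fun h => hne (by rw [h])
      obtain ⟨hadj, hcommon⟩ := hS.2 u hu v hv huv
      constructor
      · intro ⟨_, hdisj⟩
        exact (Finset.disjoint_left.1 hdisj) (Finset.mem_insert_self _ _)
          (Finset.mem_insert_self _ _)
      · rintro w hw ⟨⟨hne1, hd1⟩, ⟨hne2, hd2⟩⟩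
        -- w is disjoint from insert (n+1) u and insert (n+1) v, so n+1 ∉ w
        have hnw : (n + 1) ∉ w :=
          fun h => (Finset.disjoint_left.1 hd1) (Finset.mem_insert_self _ _) h
        have hwmem : w ⊆ Finset.Icc 1 (n + 1) ∧ w.card = r + 1 := by
          simpa [KneserVerts, Finset.mem_powersetCard] using hw
        have hwsub : w ⊆ Finset.Icc 1 n := by
          intro a ha
          have h1 := hwmem.1 ha
          simp only [Finset.mem_Icc] at h1 ⊢
          refine ⟨h1.1, ?_⟩
          rcases Nat.lt_or_ge a (n + 1) with h | h
          · omega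
          · exfalso; have : a = n + 1 := by omega
            exact hnw (this ▸ ha)
        obtain ⟨w', hw'sub, hw'card⟩ := Finset.exists_subset_card_eq
          (show r ≤ w.card by rw [hwmem.2]; omega) (s := w)
        have hw'vert : w' ∈ KneserVerts n r := by
          simp only [KneserVerts, Finset.mem_powersetCard]
          exact ⟨hw'sub.trans hwsub, hw'card⟩
        have hdu : Disjoint u w' := by
          refine Finset.disjoint_left.2 fun a hau haw => ?_
          exact (Finset.disjoint_left.1 hd1)
            (Finset.mem_insert_of_mem hau) (hw'sub haw)
        have hdv : Disjoint w' v := by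
          refine Finset.disjoint_left.2 fun a haw hav => ?_
          exact (Finset.disjoint_left.1 hd2) (hw'sub haw)
            (Finset.mem_insert_of_mem hav)
        have hune : u.Nonempty := by
          rw [← Finset.card_pos, (hmem u hu).2]; omega
        have hvne : v.Nonempty := by
          rw [← Finset.card_pos, (hmem v hv).2]; omega
        have hne1' : u ≠ w' := by
          rintro rfl
          obtain ⟨a, ha⟩ := hune
          exact (Finset.disjoint_left.1 hdu) ha ha
        have hne2' : w' ≠ v := by
          rintro rfl
          obtain ⟨a, ha⟩ := hvne
          exact (Finset.disjoint_left.1 hdv) ha ha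
        exact hcommon w' hw'vert ⟨⟨hne1', hdu⟩, ⟨hne2', hdv⟩⟩
  · exact Finset.card_image_of_injOn hinj

theorem stmt_13 (n r : ℕ) (hr : 1 ≤ r) (hn : 2 * r + 2 ≤ n) :
    twoPackingNum n r ≤ twoPackingNum (n + 1) (r + 1) := by
  unfold twoPackingNum
  apply csSup_le_csSup
  · -- bounded above
    refine ⟨(KneserVerts (n + 1) (r + 1)).card, ?_⟩
    rintro m ⟨S, hS, rfl⟩
    exact Finset.card_le_card hS.1
  · -- nonempty: empty packing
    exact ⟨0, ∅, ⟨Finset.empty_subset _, by simp⟩, Finset.card_empty⟩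
  · rintro m ⟨S, hS, rfl⟩
    obtain ⟨hpack, hcard⟩ := lift_packing n r hr S hS
    exact ⟨S.image (insert (n + 1)), hpack, hcard⟩
end

section
/- Let r ≥ 3 and 2 ≤ t ≤ (r+3)/3, and set n = 3r−t. If ρ_2(K(n,r)) ≥ 4, then there exists a 2-packing S of K(n,r) with |S| = 4 such that every element x ∈ [n] belongs to at most 2 of the sets in S. -/
open Finset

theorem stmt_14 (r t : ℕ) (hr : 3 ≤ r) (ht2 : 2 ≤ t) (ht : 3 * t ≤ r + 3)
    (hp : 4 ≤ twoPackingNum (3 * r - t) r) :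
    ∃ S : Finset (Finset ℕ), IsTwoPacking (3 * r - t) r S ∧ S.card = 4 ∧
      ∀ x ∈ Finset.Icc 1 (3 * r - t), (S.filter fun u => x ∈ u).card ≤ 2 := by
  set n := 3 * r - t with hn
  have htr : t ≤ r := by omega
  -- Step 1: extract a 2-packing of size 4
  have hbdd : BddAbove {m | ∃ S, IsTwoPacking n r S ∧ S.card = m} :=
    ⟨(KneserVerts n r).card, by rintro m ⟨S, hS, rfl⟩; exact Finset.card_le_card hS.1⟩
  have hnE : Set.Nonempty {m | ∃ S, IsTwoPacking n r S ∧ S.card = m} :=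
    ⟨0, ∅, ⟨Finset.empty_subset _, by simp [IsTwoPacking]⟩, Finset.card_empty⟩
  obtain ⟨S0, hS0, hScard⟩ := Nat.sSup_mem hnE hbdd
  have h4 : 4 ≤ S0.card := by
    rw [hScard]; exact hp
  obtain ⟨T, hTsub, hT4⟩ := Finset.exists_subset_card_eq h4
  have hTne : T.Nonempty := by rw [← Finset.card_pos, hT4]; norm_num
  obtain ⟨a, haT⟩ := hTne
  have h3 : (T.erase a).card = 3 := by rw [Finset.card_erase_of_mem haT, hT4]
  obtain ⟨b, c, d, hbc, hbd, hcd, hT3⟩ := Finset.card_eq_three.mp h3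
  have hbE : b ∈ T.erase a := by rw [hT3]; simp
  have hcE : c ∈ T.erase a := by rw [hT3]; simp
  have hdE : d ∈ T.erase a := by rw [hT3]; simp
  have hab : a ≠ b := (Finset.ne_of_mem_erase hbE).symm
  have hac : a ≠ c := (Finset.ne_of_mem_erase hcE).symm
  have had : a ≠ d := (Finset.ne_of_mem_erase hdE).symm
  have haS : a ∈ S0 := hTsub haT
  have hbS : b ∈ S0 := hTsub (Finset.mem_of_mem_erase hbE)
  have hcS : c ∈ S0 := hTsub (Finset.mem_of_mem_erase hcE)
  have hdS : d ∈ S0 := hTsub (Finset.mem_of_mem_erase hdE)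
  -- basic facts about members of S0
  have hmem : ∀ u ∈ S0, u ⊆ Finset.Icc 1 n ∧ u.card = r := by
    intro u hu
    have := hS0.1 hu
    rwa [KneserVerts, Finset.mem_powersetCard] at this
  -- pairwise intersection upper bound
  have pairUB : ∀ u ∈ S0, ∀ v ∈ S0, u ≠ v → (u ∩ v).card ≤ t - 1 := by
    intro u hu v hv huv
    by_contra hcon
    push_neg at hcon
    have hcu := hmem u hu
    have hcv := hmem v hv
    have hUI : (u ∪ v).card + (u ∩ v).card = r + r := by
      rw [Finset.card_union_add_card_inter, hcu.2, hcv.2]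
    have hsubI : u ∪ v ⊆ Finset.Icc 1 n := Finset.union_subset hcu.1 hcv.1
    have hC : (Finset.Icc 1 n \ (u ∪ v)).card = n - (u ∪ v).card := by
      rw [Finset.card_sdiff_of_subset hsubI, Nat.card_Icc]
      omega
    have hrC : r ≤ (Finset.Icc 1 n \ (u ∪ v)).card := by omega
    obtain ⟨w, hwsub, hwcard⟩ := Finset.exists_subset_card_eq hrC
    have hwvert : w ∈ KneserVerts n r := by
      rw [KneserVerts, Finset.mem_powersetCard]
      exact ⟨hwsub.trans Finset.sdiff_subset, hwcard⟩
    have hdisj : Disjoint w (u ∪ v) :=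
      Finset.disjoint_of_subset_left hwsub Finset.sdiff_disjoint
    rw [Finset.disjoint_union_right] at hdisj
    have hwu : w ≠ u := by
      rintro rfl
      rw [disjoint_self.mp hdisj.1] at hwcard
      simp [Finset.bot_eq_empty] at hwcard
      omega
    have hwv : w ≠ v := by
      rintro rfl
      rw [disjoint_self.mp hdisj.2] at hwcard
      simp [Finset.bot_eq_empty] at hwcard
      omega
    exact (hS0.2 u hu v hv huv).2 w hwvert
      ⟨⟨hwu.symm, hdisj.1.symm⟩, ⟨hwv, hdisj.2⟩⟩
  -- counting argument: 4r ≤ n + 6(t-1)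
  have hsum1 : ∀ u : Finset ℕ, u ⊆ Finset.Icc 1 n →
      ∑ x ∈ Finset.Icc 1 n, (if x ∈ u then (1:ℕ) else 0) = u.card := by
    intro u hu
    rw [Finset.sum_ite_mem, Finset.inter_eq_right.mpr hu, Finset.sum_const,
      smul_eq_mul, mul_one]
  have hsa := hmem a haS
  have hsb := hmem b hbS
  have hsc := hmem c hcS
  have hsd := hmem d hdS
  have hUsub : a ∪ b ∪ c ∪ d ⊆ Finset.Icc 1 n :=
    Finset.union_subset (Finset.union_subset (Finset.union_subset hsa.1 hsb.1) hsc.1) hsd.1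
  have hpoint : ∀ x ∈ Finset.Icc 1 n,
      ((if x ∈ a then (1:ℕ) else 0) + (if x ∈ b then 1 else 0) +
        (if x ∈ c then 1 else 0) + (if x ∈ d then 1 else 0)) ≤
      ((if x ∈ a ∪ b ∪ c ∪ d then (1:ℕ) else 0) + (if x ∈ a ∩ b then 1 else 0) +
        (if x ∈ a ∩ c then 1 else 0) + (if x ∈ a ∩ d then 1 else 0) +
        (if x ∈ b ∩ c then 1 else 0) + (if x ∈ b ∩ d then 1 else 0) +
        (if x ∈ c ∩ d then 1 else 0)) := by
    intro x _
    by_cases hxa : x ∈ a <;> by_cases hxb : x ∈ b <;> by_cases hxc : x ∈ c <;>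
      by_cases hxd : x ∈ d <;>
      simp [hxa, hxb, hxc, hxd, Finset.mem_union, Finset.mem_inter] <;> omega
  have hkey : 4 * r ≤ n + 6 * (t - 1) := by
    have hs := Finset.sum_le_sum hpoint
    rw [Finset.sum_add_distrib, Finset.sum_add_distrib, Finset.sum_add_distrib,
      Finset.sum_add_distrib, Finset.sum_add_distrib, Finset.sum_add_distrib,
      Finset.sum_add_distrib, Finset.sum_add_distrib, Finset.sum_add_distrib] at hs
    rw [hsum1 a hsa.1, hsum1 b hsb.1, hsum1 c hsc.1, hsum1 d hsd.1,
      hsum1 _ hUsub, hsum1 _ ((Finset.inter_subset_left).trans hsa.1),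
      hsum1 _ ((Finset.inter_subset_left).trans hsa.1),
      hsum1 _ ((Finset.inter_subset_left).trans hsa.1),
      hsum1 _ ((Finset.inter_subset_left).trans hsb.1),
      hsum1 _ ((Finset.inter_subset_left).trans hsb.1),
      hsum1 _ ((Finset.inter_subset_left).trans hsc.1)] at hs
    have hU : (a ∪ b ∪ c ∪ d).card ≤ n := by
      have := Finset.card_le_card hUsub
      rwa [Nat.card_Icc, Nat.add_sub_cancel] at this
    have p1 := pairUB a haS b hbS hab
    have p2 := pairUB a haS c hcS hac
    have p3 := pairUB a haS d hdS had
    have p4 := pairUB b hbS c hcS hbc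
    have p5 := pairUB b hbS d hdS hbd
    have p6 := pairUB c hcS d hdS hcd
    omega
  clear hpoint pairUB hsum1 hS0 hmem hbdd hnE hScard h4 hTsub hT4 haT h3 hT3 hbE hcE hdE
  clear hbc hbd hcd hab hac had haS hbS hcS hdS hsa hsb hsc hsd hUsub T S0 a b c d hp
  -- Step 2: explicit construction
  set s := (r + t + 5) / 6 with hsdef
  have hs1 : 1 ≤ s := by omega
  have hst : s ≤ t - 1 := by omega
  have h3s : 3 * s ≤ r := by omega
  have h6s : r + t ≤ 6 * s := by omega
  set p := r - 3 * s with hpdef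
  set A : Finset ℕ := Finset.Icc 1 (3*s) ∪ Finset.Icc (6*s+1) (6*s+p) with hA
  set B : Finset ℕ := Finset.Icc 1 s ∪ Finset.Icc (3*s+1) (5*s) ∪
    Finset.Icc (6*s+p+1) (6*s+2*p) with hB
  set C : Finset ℕ := Finset.Icc (s+1) (2*s) ∪ Finset.Icc (3*s+1) (4*s) ∪
    Finset.Icc (5*s+1) (6*s) ∪ Finset.Icc (6*s+2*p+1) (6*s+3*p) with hC
  set D : Finset ℕ := Finset.Icc (2*s+1) (3*s) ∪ Finset.Icc (4*s+1) (6*s) ∪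
    Finset.Icc (6*s+3*p+1) (6*s+4*p) with hD
  clear_value A B C D
  have hAsub : A ⊆ Finset.Icc 1 n := by
    intro x hx; rw [hA] at hx; simp only [Finset.mem_union, Finset.mem_Icc] at hx ⊢; omega
  have hBsub : B ⊆ Finset.Icc 1 n := by
    intro x hx; rw [hB] at hx; simp only [Finset.mem_union, Finset.mem_Icc] at hx ⊢; omega
  have hCsub : C ⊆ Finset.Icc 1 n := by
    intro x hx; rw [hC] at hx; simp only [Finset.mem_union, Finset.mem_Icc] at hx ⊢; omega
  have hDsub : D ⊆ Finset.Icc 1 n := by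
    intro x hx; rw [hD] at hx; simp only [Finset.mem_union, Finset.mem_Icc] at hx ⊢; omega
  have hdisjI : ∀ a1 b1 c1 d1 : ℕ, b1 < c1 →
      Disjoint (Finset.Icc a1 b1) (Finset.Icc c1 d1) := by
    intro a1 b1 c1 d1 h
    rw [Finset.disjoint_left]
    intro x hx hx'
    simp only [Finset.mem_Icc] at hx hx'
    omega
  have hcardA : A.card = r := by
    rw [hA, Finset.card_union_of_disjoint (hdisjI _ _ _ _ (by omega)),
      Nat.card_Icc, Nat.card_Icc]
    omega
  have hcardB : B.card = r := by
    rw [hB, Finset.card_union_of_disjoint, Finset.card_union_of_disjoint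
      (hdisjI _ _ _ _ (by omega)), Nat.card_Icc, Nat.card_Icc, Nat.card_Icc]
    · omega
    · rw [Finset.disjoint_left]
      intro x hx hx'
      simp only [Finset.mem_union, Finset.mem_Icc] at hx hx'
      omega
  have hcardC : C.card = r := by
    rw [hC, Finset.card_union_of_disjoint, Finset.card_union_of_disjoint,
      Finset.card_union_of_disjoint (hdisjI _ _ _ _ (by omega)),
      Nat.card_Icc, Nat.card_Icc, Nat.card_Icc, Nat.card_Icc]
    · omega
    · rw [Finset.disjoint_left]
      intro x hx hx'
      simp only [Finset.mem_union, Finset.mem_Icc] at hx hx'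
      omega
    · rw [Finset.disjoint_left]
      intro x hx hx'
      simp only [Finset.mem_union, Finset.mem_Icc] at hx hx'
      omega
  have hcardD : D.card = r := by
    rw [hD, Finset.card_union_of_disjoint, Finset.card_union_of_disjoint
      (hdisjI _ _ _ _ (by omega)), Nat.card_Icc, Nat.card_Icc, Nat.card_Icc]
    · omega
    · rw [Finset.disjoint_left]
      intro x hx hx'
      simp only [Finset.mem_union, Finset.mem_Icc] at hx hx'
      omega
  -- pairwise intersections
  have hiAB : (A ∩ B).card = s := by
    have : A ∩ B = Finset.Icc 1 s := by
      ext x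
      rw [hA, hB]
      simp only [Finset.mem_inter, Finset.mem_union, Finset.mem_Icc]
      omega
    rw [this, Nat.card_Icc]; omega
  have hiAC : (A ∩ C).card = s := by
    have : A ∩ C = Finset.Icc (s+1) (2*s) := by
      ext x
      rw [hA, hC]
      simp only [Finset.mem_inter, Finset.mem_union, Finset.mem_Icc]
      omega
    rw [this, Nat.card_Icc]; omega
  have hiAD : (A ∩ D).card = s := by
    have : A ∩ D = Finset.Icc (2*s+1) (3*s) := by
      ext x
      rw [hA, hD]
      simp only [Finset.mem_inter, Finset.mem_union, Finset.mem_Icc]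
      omega
    rw [this, Nat.card_Icc]; omega
  have hiBC : (B ∩ C).card = s := by
    have : B ∩ C = Finset.Icc (3*s+1) (4*s) := by
      ext x
      rw [hB, hC]
      simp only [Finset.mem_inter, Finset.mem_union, Finset.mem_Icc]
      omega
    rw [this, Nat.card_Icc]; omega
  have hiBD : (B ∩ D).card = s := by
    have : B ∩ D = Finset.Icc (4*s+1) (5*s) := by
      ext x
      rw [hB, hD]
      simp only [Finset.mem_inter, Finset.mem_union, Finset.mem_Icc]
      omega
    rw [this, Nat.card_Icc]; omega
  have hiCD : (C ∩ D).card = s := by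
    have : C ∩ D = Finset.Icc (5*s+1) (6*s) := by
      ext x
      rw [hC, hD]
      simp only [Finset.mem_inter, Finset.mem_union, Finset.mem_Icc]
      omega
    rw [this, Nat.card_Icc]; omega
  -- distinctness
  have hneq : ∀ u v : Finset ℕ, u.card = r → (u ∩ v).card = s → u ≠ v := by
    intro u v hcu hi h
    subst h
    rw [Finset.inter_self, hcu] at hi
    omega
  have hAB : A ≠ B := hneq A B hcardA hiAB
  have hAC : A ≠ C := hneq A C hcardA hiAC
  have hAD : A ≠ D := hneq A D hcardA hiAD
  have hBC : B ≠ C := hneq B C hcardB hiBC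
  have hBD : B ≠ D := hneq B D hcardB hiBD
  have hCD : C ≠ D := hneq C D hcardC hiCD
  -- packing property for a pair
  have pack2 : ∀ u v : Finset ℕ, u ⊆ Finset.Icc 1 n → v ⊆ Finset.Icc 1 n →
      u.card = r → v.card = r → (u ∩ v).card = s → u ≠ v →
      ¬ KneserAdj u v ∧ ∀ w ∈ KneserVerts n r, ¬ (KneserAdj u w ∧ KneserAdj w v) := by
    intro u v hu hv hcu hcv hcap huv
    constructor
    · rintro ⟨-, hdis⟩
      rw [Finset.disjoint_iff_inter_eq_empty] at hdis
      rw [hdis, Finset.card_empty] at hcap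
      omega
    · rintro w hw ⟨⟨hneu, hdu⟩, ⟨hnev, hdv⟩⟩
      rw [KneserVerts, Finset.mem_powersetCard] at hw
      have hsub : w ⊆ Finset.Icc 1 n \ (u ∪ v) := by
        rw [Finset.subset_sdiff]
        exact ⟨hw.1, by rw [Finset.disjoint_union_right]; exact ⟨hdu.symm, hdv⟩⟩
      have h1 : (Finset.Icc 1 n \ (u ∪ v)).card = n - (u ∪ v).card := by
        rw [Finset.card_sdiff_of_subset (Finset.union_subset hu hv), Nat.card_Icc]
        omega
      have h2 : (u ∪ v).card + s = r + r := by
        have := Finset.card_union_add_card_inter u v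
        rw [hcap, hcu, hcv] at this
        omega
      have h3 := Finset.card_le_card hsub
      rw [hw.2, h1] at h3
      omega
  have vertA : A ∈ KneserVerts n r := by
    rw [KneserVerts, Finset.mem_powersetCard]; exact ⟨hAsub, hcardA⟩
  have vertB : B ∈ KneserVerts n r := by
    rw [KneserVerts, Finset.mem_powersetCard]; exact ⟨hBsub, hcardB⟩
  have vertC : C ∈ KneserVerts n r := by
    rw [KneserVerts, Finset.mem_powersetCard]; exact ⟨hCsub, hcardC⟩
  have vertD : D ∈ KneserVerts n r := by
    rw [KneserVerts, Finset.mem_powersetCard]; exact ⟨hDsub, hcardD⟩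
  refine ⟨{A, B, C, D}, ⟨?_, ?_⟩, ?_, ?_⟩
  · intro u hu
    simp only [Finset.mem_insert, Finset.mem_singleton] at hu
    rcases hu with rfl | rfl | rfl | rfl
    · exact vertA
    · exact vertB
    · exact vertC
    · exact vertD
  · intro u hu v hv huv
    simp only [Finset.mem_insert, Finset.mem_singleton] at hu hv
    have hiBA : (B ∩ A).card = s := by rw [Finset.inter_comm]; exact hiAB
    have hiCA : (C ∩ A).card = s := by rw [Finset.inter_comm]; exact hiAC
    have hiDA : (D ∩ A).card = s := by rw [Finset.inter_comm]; exact hiAD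
    have hiCB : (C ∩ B).card = s := by rw [Finset.inter_comm]; exact hiBC
    have hiDB : (D ∩ B).card = s := by rw [Finset.inter_comm]; exact hiBD
    have hiDC : (D ∩ C).card = s := by rw [Finset.inter_comm]; exact hiCD
    rcases hu with rfl | rfl | rfl | rfl <;> rcases hv with rfl | rfl | rfl | rfl
    · exact absurd rfl huv
    · exact pack2 u v hAsub hBsub hcardA hcardB hiAB huv
    · exact pack2 u v hAsub hCsub hcardA hcardC hiAC huv
    · exact pack2 u v hAsub hDsub hcardA hcardD hiAD huv
    · exact pack2 u v hBsub hAsub hcardB hcardA hiBA huv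
    · exact absurd rfl huv
    · exact pack2 u v hBsub hCsub hcardB hcardC hiBC huv
    · exact pack2 u v hBsub hDsub hcardB hcardD hiBD huv
    · exact pack2 u v hCsub hAsub hcardC hcardA hiCA huv
    · exact pack2 u v hCsub hBsub hcardC hcardB hiCB huv
    · exact absurd rfl huv
    · exact pack2 u v hCsub hDsub hcardC hcardD hiCD huv
    · exact pack2 u v hDsub hAsub hcardD hcardA hiDA huv
    · exact pack2 u v hDsub hBsub hcardD hcardB hiDB huv
    · exact pack2 u v hDsub hCsub hcardD hcardC hiDC huv
    · exact absurd rfl huv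
  · rw [Finset.card_insert_of_notMem (by simp [hAB, hAC, hAD]),
      Finset.card_insert_of_notMem (by simp [hBC, hBD]),
      Finset.card_insert_of_notMem (by simp [hCD]), Finset.card_singleton]
  · intro x hx
    clear_value n s p
    clear * - hA hB hC hD hAB hAC hAD hBC hBD hCD hs1 hst h3s h6s hpdef hsdef hn hr ht2 ht htr x
    by_cases hx1 : x ∈ A <;> by_cases hx2 : x ∈ B <;> by_cases hx3 : x ∈ C <;>
      by_cases hx4 : x ∈ D <;>
    first
    | (exfalso
       rw [hA] at hx1
       rw [hB] at hx2
       rw [hC] at hx3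
       rw [hD] at hx4
       simp only [Finset.mem_union, Finset.mem_Icc] at hx1 hx2 hx3 hx4
       omega)
    | (simp [Finset.filter_insert, Finset.filter_singleton, hx1, hx2, hx3, hx4,
        hAB, hAC, hAD, hBC, hBD, hCD, Finset.card_insert_of_notMem])
end
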